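/- Let f, g ∈ C[x,y,z] and F = (f, g, 0). Then F determines a Poisson bracket on C[x,y,z] via {y,z}=f, {z,x}=g, {x,y}=0 if and only if there exist h ∈ C[x,y,z] and f₁, g₁ ∈ C[x,y] with f = h f₁ and g = h g₁. -/

import Mathlib

open MvPolynomial

/-- A Poisson bracket on a commutative `ℂ`-algebra `B`. -/
structure IsPoissonBracket {B : Type*} [CommRing B] [Algebra ℂ B]
    (br : B → B → B) : Prop where
  add_left : ∀ a b c : B, br (a + b) c = br a c + br b c
  smul_left : ∀ (r : ℂ) (a b : B), br (r • a) b = r • br a b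
  antisymm : ∀ a b : B, br a b = - br b a
  jacobi : ∀ a b c : B, br a (br b c) + br b (br c a) + br c (br a b) = 0
  leibniz : ∀ a b c : B, br a (b * c) = br a b * c + b * br a c

/-- The triple `(f,g,h)` determines a Poisson bracket on `ℂ[x,y,z]` via
`{y,z} = f`, `{z,x} = g`, `{x,y} = h`. -/
def IsPoissonTriple (f g h : MvPolynomial (Fin 3) ℂ) : Prop :=
  ∃ br : MvPolynomial (Fin 3) ℂ → MvPolynomial (Fin 3) ℂ → MvPolynomial (Fin 3) ℂ,
    IsPoissonBracket br ∧ br (X 1) (X 2) = f ∧ br (X 2) (X 0) = g ∧ br (X 0) (X 1) = h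

/-! A derivation of `ℂ[x,y,z]` is determined by its values on `x, y, z`, so a Poisson bracket with
`{y,z} = f`, `{z,x} = g`, `{x,y} = h` must be `{a,b} = F · (∇a × ∇b)` for `F = (f,g,h)`; the
Jacobiator of this bracket is `-(F · curl F) det(∇a, ∇b, ∇c)`, so `(f,g,h)` is a Poisson triple
exactly when `F · curl F = 0`. For `h = 0` this reads `g ∂_z f = f ∂_z g`. Dividing out the common
factor of `f` and `g` leaves coprime `f₁, g₁` with `f₁ ∂_z g₁ = g₁ ∂_z f₁`, hence `f₁ ∣ ∂_z f₁`,
which forces `∂_z f₁ = 0` by comparing degrees in `z`; likewise for `g₁`. -/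

namespace IsPoissonBracket

variable {B : Type*} [CommRing B] [Algebra ℂ B] {br : B → B → B}

theorem add_right (hbr : IsPoissonBracket br) (a b c : B) : br a (b + c) = br a b + br a c := by
  rw [hbr.antisymm, hbr.add_left, hbr.antisymm b, hbr.antisymm c, neg_add, neg_neg, neg_neg]

theorem smul_right (hbr : IsPoissonBracket br) (r : ℂ) (a b : B) : br a (r • b) = r • br a b := by
  rw [hbr.antisymm, hbr.smul_left, hbr.antisymm b, smul_neg, neg_neg]

theorem self_eq_zero (hbr : IsPoissonBracket br) (a : B) : br a a = 0 := by
  have h : (2 : ℂ) • br a a = 0 := by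
    rw [two_smul]
    nth_rewrite 1 [hbr.antisymm]
    exact neg_add_cancel _
  exact (smul_eq_zero.1 h).resolve_left two_ne_zero

def derivation (hbr : IsPoissonBracket br) (a : B) : Derivation ℂ B B :=
  Derivation.mk' ⟨⟨br a, hbr.add_right a⟩, fun r b => hbr.smul_right r a b⟩ fun b c => by
    simp only [LinearMap.coe_mk, AddHom.coe_mk, hbr.leibniz, smul_eq_mul]
    ring

end IsPoissonBracket

namespace MvPolynomial

variable {R σ : Type*} [CommSemiring R] {i : σ} {p q : MvPolynomial σ R}

theorem derivation_eq_sum_mul_pderiv [Fintype σ]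
    (D : Derivation R (MvPolynomial σ R) (MvPolynomial σ R)) (p : MvPolynomial σ R) :
    D p = ∑ i, D (X i) * pderiv i p := by
  classical
  set E : Derivation R (MvPolynomial σ R) (MvPolynomial σ R) := ∑ i, D (X i) • pderiv i
  have hE (q : MvPolynomial σ R) : E q = ∑ i, D (X i) * pderiv i q := by
    rw [← Derivation.coeFnAddMonoidHom_apply, map_sum]
    simp [Derivation.coeFnAddMonoidHom_apply, Finset.sum_apply]
  have hDE : D = E := derivation_ext fun j => by simp [hE, pderiv_X, Pi.single_apply]
  rw [← hE, hDE]

theorem pderiv_pderiv_comm (i j : σ) (p : MvPolynomial σ R) :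
    pderiv i (pderiv j p) = pderiv j (pderiv i p) := by
  classical
  induction p using MvPolynomial.induction_on with
  | C a => simp
  | add p q hp hq => simp only [map_add, hp, hq]
  | mul_X p n hp =>
    simp only [pderiv_mul, map_add, hp, pderiv_X, Pi.single_apply]
    split_ifs <;> simp only [pderiv_one, map_zero, mul_zero, mul_one, add_zero, add_right_comm]

theorem degreeOf_pderiv_lt (h : pderiv i p ≠ 0) : degreeOf i (pderiv i p) < degreeOf i p := by
  classical
  have hlt : ∀ m ∈ (pderiv i p).support, m i < degreeOf i p := fun m hm => by
    have hcoeff : m + Finsupp.single i 1 ∈ p.support := by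
      rw [mem_support_iff, coeff_pderiv] at hm
      exact mem_support_iff.2 (left_ne_zero_of_mul hm)
    simpa using monomial_le_degreeOf i hcoeff
  obtain ⟨m, hm⟩ := support_nonempty.2 h
  exact (degreeOf_lt_iff ((Nat.zero_le _).trans_lt (hlt m hm))).2 hlt

theorem degreeOf_le_of_dvd [NoZeroDivisors R] (h : p ∣ q) (hq : q ≠ 0) :
    degreeOf i p ≤ degreeOf i q := by
  obtain ⟨r, rfl⟩ := h
  rw [degreeOf_mul_eq (left_ne_zero_of_mul hq) (right_ne_zero_of_mul hq)]
  exact Nat.le_add_right _ _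

theorem pderiv_eq_zero_of_dvd [NoZeroDivisors R] (h : p ∣ pderiv i p) : pderiv i p = 0 := by
  by_contra hne
  exact (degreeOf_le_of_dvd h hne).not_gt (degreeOf_pderiv_lt hne)

variable [IsAddTorsionFree R]

theorem pderiv_eq_zero_iff_notMem_vars : pderiv i p = 0 ↔ i ∉ p.vars := by
  classical
  refine ⟨fun h hi => ?_, pderiv_eq_zero_of_notMem_vars⟩
  obtain ⟨d, hd, hid⟩ := (mem_vars_iff_mem_support i).1 hi
  have hd' : d - Finsupp.single i 1 + Finsupp.single i 1 = d :=
    tsub_add_cancel_of_le (Finsupp.single_le_iff.2 (Nat.one_le_iff_ne_zero.2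
      (Finsupp.mem_support_iff.1 hid)))
  have hcoeff := congrArg (coeff (d - Finsupp.single i 1)) h
  rw [coeff_pderiv, hd', coeff_zero, mul_comm, ← Nat.cast_succ, ← nsmul_eq_mul] at hcoeff
  exact mem_support_iff.1 hd ((smul_eq_zero.1 hcoeff).resolve_left (Nat.succ_ne_zero _))

theorem mem_supported_iff_forall_pderiv_eq_zero {s : Set σ} :
    p ∈ supported R s ↔ ∀ i ∉ s, pderiv i p = 0 := by
  simp only [mem_supported, pderiv_eq_zero_iff_notMem_vars, Set.subset_def, Finset.mem_coe]
  exact forall_congr' fun i => not_imp_not.symm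

end MvPolynomial

theorem Derivation.exists_common_factor_of_mul_apply_eq {S R : Type*} [CommSemiring S]
    [CommRing R] [IsDomain R] [UniqueFactorizationMonoid R] [Algebra S R] (D : Derivation S R R)
    (hD : ∀ p, p ∣ D p → D p = 0) {f g : R} (hfg : f * D g = g * D f) :
    ∃ c f₁ g₁, D f₁ = 0 ∧ D g₁ = 0 ∧ f = c * f₁ ∧ g = c * g₁ := by
  rcases eq_or_ne g 0 with rfl | hg
  · exact ⟨f, 1, 0, D.map_one_eq_zero, D.map_zero, (mul_one f).symm, (mul_zero f).symm⟩
  obtain ⟨f₁, g₁, c, hrel, rfl, rfl⟩ := UniqueFactorizationMonoid.exists_reduced_factors' f g hg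
  have hc : c ≠ 0 := left_ne_zero_of_mul hg
  have h₁ : f₁ * D g₁ = g₁ * D f₁ := by
    refine mul_left_cancel₀ (pow_ne_zero 2 hc) ?_
    simp only [D.leibniz, smul_eq_mul] at hfg
    linear_combination hfg
  refine ⟨c, f₁, g₁, hD f₁ ?_, hD g₁ ?_, rfl, rfl⟩
  · exact hrel.dvd_of_dvd_mul_left ⟨D g₁, h₁.symm⟩
  · exact hrel.symm.dvd_of_dvd_mul_left ⟨D f₁, h₁⟩

noncomputable section CrossBracket

variable (f g h : MvPolynomial (Fin 3) ℂ)

-- `F · curl F` for `F = (f, g, h)`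
def dotCurl : MvPolynomial (Fin 3) ℂ :=
  f * (pderiv 1 h - pderiv 2 g) + g * (pderiv 2 f - pderiv 0 h) + h * (pderiv 0 g - pderiv 1 f)

-- `{a, b} = F · (∇a × ∇b)`
def crossBracket (a b : MvPolynomial (Fin 3) ℂ) : MvPolynomial (Fin 3) ℂ :=
  f * (pderiv 1 a * pderiv 2 b - pderiv 2 a * pderiv 1 b) +
    g * (pderiv 2 a * pderiv 0 b - pderiv 0 a * pderiv 2 b) +
    h * (pderiv 0 a * pderiv 1 b - pderiv 1 a * pderiv 0 b)

theorem crossBracket_jacobi (a b c : MvPolynomial (Fin 3) ℂ) :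
    crossBracket f g h a (crossBracket f g h b c) + crossBracket f g h b (crossBracket f g h c a) +
        crossBracket f g h c (crossBracket f g h a b) =
      -dotCurl f g h * (pderiv 0 a * (pderiv 1 b * pderiv 2 c - pderiv 2 b * pderiv 1 c) -
        pderiv 1 a * (pderiv 0 b * pderiv 2 c - pderiv 2 b * pderiv 0 c) +
        pderiv 2 a * (pderiv 0 b * pderiv 1 c - pderiv 1 b * pderiv 0 c)) := by
  simp only [crossBracket, dotCurl, map_add, map_sub, pderiv_mul, pderiv_pderiv_comm (1 : Fin 3) 0,
    pderiv_pderiv_comm (2 : Fin 3) 0, pderiv_pderiv_comm (2 : Fin 3) 1]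
  ring

variable {f g h} in
theorem isPoissonBracket_crossBracket (hF : dotCurl f g h = 0) :
    IsPoissonBracket (crossBracket f g h) where
  add_left a b c := by simp only [crossBracket, map_add]; ring
  smul_left r a b := by simp only [crossBracket, smul_eq_C_mul, pderiv_C_mul]; ring
  antisymm a b := by simp only [crossBracket]; ring
  jacobi a b c := by rw [crossBracket_jacobi, hF, neg_zero, zero_mul]
  leibniz a b c := by simp only [crossBracket, pderiv_mul]; ring

theorem crossBracket_X_one_X_two : crossBracket f g h (X 1) (X 2) = f := by
  simp [crossBracket, pderiv_X]

theorem crossBracket_X_two_X_zero : crossBracket f g h (X 2) (X 0) = g := by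
  simp [crossBracket, pderiv_X]

theorem crossBracket_X_zero_X_one : crossBracket f g h (X 0) (X 1) = h := by
  simp [crossBracket, pderiv_X]

end CrossBracket

theorem IsPoissonBracket.dotCurl_eq_zero
    {br : MvPolynomial (Fin 3) ℂ → MvPolynomial (Fin 3) ℂ → MvPolynomial (Fin 3) ℂ}
    (hbr : IsPoissonBracket br) :
    dotCurl (br (X 1) (X 2)) (br (X 2) (X 0)) (br (X 0) (X 1)) = 0 := by
  have hsum (a p : MvPolynomial (Fin 3) ℂ) : br a p = ∑ i, br a (X i) * pderiv i p :=
    derivation_eq_sum_mul_pderiv (hbr.derivation a) p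
  have jac := hbr.jacobi (X 0) (X 1) (X 2)
  rw [hsum (X 0) (br (X 1) (X 2)), hsum (X 1) (br (X 2) (X 0)), hsum (X 2) (br (X 0) (X 1))] at jac
  simp only [Fin.sum_univ_three, hbr.self_eq_zero, Fin.isValue] at jac
  rw [hbr.antisymm (X 0) (X 2), hbr.antisymm (X 1) (X 0), hbr.antisymm (X 2) (X 1)] at jac
  unfold dotCurl
  linear_combination -jac

theorem isPoissonTriple_iff_dotCurl_eq_zero (f g h : MvPolynomial (Fin 3) ℂ) :
    IsPoissonTriple f g h ↔ dotCurl f g h = 0 := by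
  refine ⟨?_, fun hF => ⟨crossBracket f g h, isPoissonBracket_crossBracket hF,
    crossBracket_X_one_X_two f g h, crossBracket_X_two_X_zero f g h,
    crossBracket_X_zero_X_one f g h⟩⟩
  rintro ⟨br, hbr, rfl, rfl, rfl⟩
  exact hbr.dotCurl_eq_zero

theorem mem_adjoin_X_zero_X_one_iff_pderiv_two_eq_zero (p : MvPolynomial (Fin 3) ℂ) :
    p ∈ Algebra.adjoin ℂ {X 0, X 1} ↔ pderiv 2 p = 0 := by
  rw [← Set.image_pair, ← supported_eq_adjoin_X, mem_supported_iff_forall_pderiv_eq_zero]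
  refine ⟨fun hp => hp 2 (by simp), fun hp i hi => ?_⟩
  fin_cases i <;> simp_all

theorem stmt_15 (f g : MvPolynomial (Fin 3) ℂ) :
    IsPoissonTriple f g 0 ↔
      ∃ h f₁ g₁ : MvPolynomial (Fin 3) ℂ,
        f₁ ∈ Algebra.adjoin ℂ {X 0, X 1} ∧ g₁ ∈ Algebra.adjoin ℂ {X 0, X 1} ∧
        f = h * f₁ ∧ g = h * g₁ := by
  have hF : dotCurl f g 0 = g * pderiv 2 f - f * pderiv 2 g := by
    simp only [dotCurl, map_zero]
    ring
  simp only [isPoissonTriple_iff_dotCurl_eq_zero, hF, sub_eq_zero,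
    mem_adjoin_X_zero_X_one_iff_pderiv_two_eq_zero]
  constructor
  · exact fun hfg => (pderiv (R := ℂ) (2 : Fin 3)).exists_common_factor_of_mul_apply_eq
      (fun _ => pderiv_eq_zero_of_dvd) hfg.symm
  · rintro ⟨c, f₁, g₁, hf₁, hg₁, rfl, rfl⟩
    simp only [pderiv_mul, hf₁, hg₁]
    ring
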